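/- arXiv:1906.01602 — 2 statements merged into one kernel-verified Lean document; each statement's English description precedes it below -/
import Mathlib

section
/- With average load N̄(λ) = 1 + 1.28·λ_u/λ, the average MSE m̄(λ) = m_d − (m_d − m_c)·exp(−C(T(N̄(λ)·r))) is monotonically decreasing in the AP density λ > 0, and tends to m_asy = m_d − (m_d − m_c)·exp(−C(T(r))) as λ → ∞. -/
noncomputable def C (x : ℝ) : ℝ := Real.sqrt x * Real.arctan (Real.sqrt x)
noncomputable def T (x : ℝ) : ℝ := (2 : ℝ) ^ x - 1

open Filter Topology

lemma monotone_C : Monotone C := fun a b hab =>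
  mul_le_mul (Real.sqrt_le_sqrt hab) (Real.arctan_strictMono.monotone (Real.sqrt_le_sqrt hab))
    (Real.arctan_nonneg.2 (Real.sqrt_nonneg a)) (Real.sqrt_nonneg b)

lemma monotone_T : Monotone T := fun _ _ hab =>
  sub_le_sub_right (Real.rpow_le_rpow_of_exponent_le one_le_two hab) 1

lemma continuous_C : Continuous C := by
  unfold C
  fun_prop

lemma continuous_T : Continuous T :=
  (Real.continuous_const_rpow two_ne_zero).sub continuous_const

lemma monotone_sub_mul_exp_neg {f : ℝ → ℝ} (hf : Monotone f) {a b : ℝ} (hab : a ≤ b) :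
    Monotone fun x => b - (b - a) * Real.exp (-f x) := fun _ _ hxy =>
  sub_le_sub_left
    (mul_le_mul_of_nonneg_left (Real.exp_le_exp.2 (neg_le_neg (hf hxy))) (sub_nonneg.2 hab)) b

lemma antitoneOn_one_add_div_mul {c r : ℝ} (hc : 0 ≤ c) (hr : 0 ≤ r) :
    AntitoneOn (fun l => (1 + c / l) * r) (Set.Ioi 0) := fun a ha _ _ hab => by
  have : 0 < a := ha
  dsimp only
  gcongr

lemma tendsto_one_add_div_mul_atTop (c r : ℝ) :
    Tendsto (fun l => (1 + c / l) * r) atTop (𝓝 r) := by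
  simpa using ((tendsto_const_nhds.div_atTop tendsto_id).const_add 1).mul_const r

theorem avgMSE_decreasing_in_density_general (mc md r lu : ℝ) (hm : mc ≤ md)
    (hr : 0 < r) (hu : 0 < lu) :
    AntitoneOn (fun l : ℝ =>
      md - (md - mc) * Real.exp (-(C (T ((1 + 1.28 * lu / l) * r))))) (Set.Ioi 0) ∧
    Filter.Tendsto (fun l : ℝ =>
      md - (md - mc) * Real.exp (-(C (T ((1 + 1.28 * lu / l) * r)))))
      Filter.atTop (nhds (md - (md - mc) * Real.exp (-(C (T r))))) := by
  have hmse := monotone_sub_mul_exp_neg (monotone_C.comp monotone_T) hm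
  have hcont : Continuous fun x => md - (md - mc) * Real.exp (-C (T x)) := by
    have := continuous_C.comp continuous_T
    fun_prop
  exact ⟨hmse.comp_antitoneOn (antitoneOn_one_add_div_mul (by positivity) hr.le),
    (hcont.tendsto r).comp (tendsto_one_add_div_mul_atTop _ r)⟩

theorem avgMSE_decreasing_in_density (mc md r lu : ℝ) (hm0 : 0 ≤ mc) (hm : mc ≤ md)
    (hr : 0 < r) (hu : 0 < lu) :
    AntitoneOn (fun l : ℝ =>
      md - (md - mc) * Real.exp (-(C (T ((1 + 1.28 * lu / l) * r))))) (Set.Ioi 0) ∧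
    Filter.Tendsto (fun l : ℝ =>
      md - (md - mc) * Real.exp (-(C (T ((1 + 1.28 * lu / l) * r)))))
      Filter.atTop (nhds (md - (md - mc) * Real.exp (-(C (T r))))) :=
  avgMSE_decreasing_in_density_general mc md r lu hm hr hu
end

section
/- For fixed r > 0 and 0 < m_c < m_t, the critical edge MSE m_{d,max}(λ) = (m_t − m_c·E(λ))/(1 − E(λ)), where E(λ) = exp(−C(T((1 + 1.28λ_u/λ)·r))), is monotonically increasing in the AP density λ > 0. -/
open Set

lemma T_strictMono : StrictMono T := fun _ _ h => by
  simpa [T] using Real.rpow_lt_rpow_of_exponent_lt one_lt_two h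

lemma T_pos {x : ℝ} (hx : 0 < x) : 0 < T x := by
  simpa [T] using T_strictMono hx

lemma C_pos {x : ℝ} (hx : 0 < x) : 0 < C x := by
  have hs : 0 < Real.sqrt x := Real.sqrt_pos.mpr hx
  exact mul_pos hs (Real.arctan_pos.mpr hs)

lemma C_monotoneOn : MonotoneOn C (Ici 0) := fun x hx y _ hxy => by
  have hs : Real.sqrt x ≤ Real.sqrt y := Real.sqrt_le_sqrt hxy
  exact mul_le_mul hs (Real.arctan_strictMono.monotone hs)
    (Real.arctan_nonneg.mpr (Real.sqrt_nonneg x)) ((Real.sqrt_nonneg x).trans hs)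

lemma monotoneOn_sub_mul_div_one_sub {a b : ℝ} (hab : a ≤ b) :
    MonotoneOn (fun x : ℝ => (b - a * x) / (1 - x)) (Iio 1) := by
  intro x hx y hy hxy
  have hx : 0 < 1 - x := sub_pos.mpr hx
  have hy : 0 < 1 - y := sub_pos.mpr hy
  have eq_add_div : ∀ z : ℝ, 0 < 1 - z → (b - a * z) / (1 - z) = a + (b - a) / (1 - z) := by
    intro z hz
    field_simp
    ring
  simp only [eq_add_div x hx, eq_add_div y hy]
  gcongr

section Load

variable {c r : ℝ}

lemma antitoneOn_load (hc : 0 ≤ c) (hr : 0 ≤ r) :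
    AntitoneOn (fun l : ℝ => (1 + c / l) * r) (Ioi 0) := fun a ha _ _ hab => by
  dsimp only
  gcongr

lemma load_pos (hc : 0 ≤ c) (hr : 0 < r) {l : ℝ} (hl : 0 < l) : 0 < (1 + c / l) * r := by
  positivity

lemma mapsTo_exp_neg_C_T_load_Iio_one (hc : 0 ≤ c) (hr : 0 < r) :
    MapsTo (fun l : ℝ => Real.exp (-(C (T ((1 + c / l) * r))))) (Ioi 0) (Iio 1) :=
  fun _ hl => Real.exp_lt_one_iff.mpr (neg_lt_zero.mpr (C_pos (T_pos (load_pos hc hr hl))))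

lemma monotoneOn_exp_neg_C_T_load (hc : 0 ≤ c) (hr : 0 < r) :
    MonotoneOn (fun l : ℝ => Real.exp (-(C (T ((1 + c / l) * r))))) (Ioi 0) :=
  fun _ ha _ hb hab => by
    have hload := antitoneOn_load hc hr.le ha hb hab
    have hT := T_strictMono.monotone hload
    have hC := C_monotoneOn (T_pos (load_pos hc hr hb)).le (T_pos (load_pos hc hr ha)).le hT
    exact Real.exp_le_exp.mpr (neg_le_neg hC)

end Load

theorem critical_edge_MSE_monotone_in_density_general (mc mt r lu : ℝ) (hr : 0 < r)
    (hmt : mc < mt) (hu : 0 < lu) :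
    MonotoneOn (fun l : ℝ =>
        (mt - mc * Real.exp (-(C (T ((1 + 1.28 * lu / l) * r))))) /
          (1 - Real.exp (-(C (T ((1 + 1.28 * lu / l) * r))))))
      (Set.Ioi 0) := by
  have hc : (0 : ℝ) ≤ 1.28 * lu := by positivity
  exact (monotoneOn_sub_mul_div_one_sub hmt.le).comp
    (monotoneOn_exp_neg_C_T_load hc hr) (mapsTo_exp_neg_C_T_load_Iio_one hc hr)

theorem critical_edge_MSE_monotone_in_density (mc mt r lu : ℝ) (hr : 0 < r)
    (hmc : 0 < mc) (hmt : mc < mt) (hu : 0 < lu) :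
    MonotoneOn (fun l : ℝ =>
        (mt - mc * Real.exp (-(C (T ((1 + 1.28 * lu / l) * r))))) /
          (1 - Real.exp (-(C (T ((1 + 1.28 * lu / l) * r))))))
      (Set.Ioi 0) :=
  critical_edge_MSE_monotone_in_density_general mc mt r lu hr hmt hu
end
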